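/- arXiv:1905.06641 — 4 statements merged into one kernel-verified Lean document; each statement's English description precedes it below -/
import Mathlib

section
/- For every iteration index k in the cloud interval {q}, the HierFAVG convex deviation bound is dominated by its end-of-interval value: G_c(k, η) ≤ h(κ₁κ₂, Δ, η) + (1/2)(κ₂² + κ₂ − 1)(κ₁ + 1)·h(κ₁, δ, η), provided η, β, δ, Δ ≥ 0 and κ₁, κ₂ ≥ 1. In particular, if δ = Δ = 0 then G_c(k, η) = 0 for all k. -/
/-- The deviation function h(x, δ, η) = (δ/β)((ηβ+1)^x − 1) − ηδx (real exponent). -/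
noncomputable def hfun (β x δ η : ℝ) : ℝ := δ / β * ((η * β + 1) ^ x - 1) - η * δ * x

/-- p(k) = ⌈k/κ₁ − (q−1)κ₂⌉. -/
noncomputable def pceil (κ₁ κ₂ q k : ℕ) : ℤ :=
  ⌈(k : ℝ) / (κ₁ : ℝ) - ((q : ℝ) - 1) * (κ₂ : ℝ)⌉

/-- G_c(k, η) = h(k−(q−1)κ₁κ₂, Δ, η) + h(k−((q−1)κ₂+p(k)−1)κ₁, δ, η)
    + (κ₁/2)(p(k)²+p(k)−2)·h(κ₁, δ, η). -/
noncomputable def Gc (β δ Δ : ℝ) (κ₁ κ₂ q : ℕ) (k : ℕ) (η : ℝ) : ℝ :=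
  hfun β ((k : ℝ) - ((q : ℝ) - 1) * κ₁ * κ₂) Δ η
  + hfun β ((k : ℝ) - (((q : ℝ) - 1) * κ₂ + (pceil κ₁ κ₂ q k : ℝ) - 1) * κ₁) δ η
  + (κ₁ : ℝ) / 2 * ((pceil κ₁ κ₂ q k : ℝ) ^ 2 + (pceil κ₁ κ₂ q k : ℝ) - 2) *
      hfun β (κ₁ : ℝ) δ η

/-- Bernoulli-type upper bound on `[0,1]`: `a^x ≤ 1 + (a-1)x` for `a ≥ 1`. -/
lemma rpow_le_one_add_mul {a x : ℝ} (ha : 1 ≤ a) (hx0 : 0 ≤ x) (hx1 : x ≤ 1) :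
    a ^ x ≤ 1 + (a - 1) * x := by
  have ha0 : (0:ℝ) < a := by linarith
  have h := convexOn_exp.2 (Set.mem_univ (0:ℝ)) (Set.mem_univ (Real.log a))
    (by linarith : (0:ℝ) ≤ 1 - x) hx0 (by ring)
  simp only [smul_eq_mul, mul_zero, zero_add, Real.exp_zero, Real.exp_log ha0] at h
  rw [Real.rpow_def_of_pos ha0]
  calc Real.exp (Real.log a * x) = Real.exp ((1 - x) * 0 + x * Real.log a) := by ring_nf
    _ ≤ (1 - x) * 1 + x * a := by simpa using h
    _ = 1 + (a - 1) * x := by ring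

/-- Lower bound `a^d ≥ 1 + d log a`. -/
lemma one_add_mul_log_le_rpow {a d : ℝ} (ha : 0 < a) : 1 + d * Real.log a ≤ a ^ d := by
  rw [Real.rpow_def_of_pos ha]
  have := Real.add_one_le_exp (d * Real.log a)
  calc 1 + d * Real.log a ≤ Real.exp (d * Real.log a) := by linarith
    _ = Real.exp (Real.log a * d) := by ring_nf

/-- `a log a ≥ a - 1` for `a ≥ 1`. -/
lemma sub_one_le_mul_log {a : ℝ} (ha : 1 ≤ a) : a - 1 ≤ a * Real.log a := by
  have ha0 : (0:ℝ) < a := by linarith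
  have h := Real.one_sub_inv_le_log_of_pos ha0
  have ha' : a⁻¹ * a = 1 := inv_mul_cancel₀ (ne_of_gt ha0)
  nlinarith

/-- The chord inequality on `{x ≥ 1}`: `a^v - a^u ≥ (a-1)(v-u)` for `1 ≤ u ≤ v`. -/
lemma chord_ge {a u v : ℝ} (ha : 1 ≤ a) (hu : 1 ≤ u) (huv : u ≤ v) :
    (a - 1) * (v - u) ≤ a ^ v - a ^ u := by
  have ha0 : (0:ℝ) < a := by linarith
  have hL : 0 ≤ Real.log a := Real.log_nonneg ha
  have h1 : a ^ u * a ^ (v - u) = a ^ v := by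
    rw [← Real.rpow_add ha0]; ring_nf
  have h2 : 1 + (v - u) * Real.log a ≤ a ^ (v - u) := one_add_mul_log_le_rpow ha0
  have h3 : a ≤ a ^ u := by
    calc a = a ^ (1:ℝ) := (Real.rpow_one a).symm
      _ ≤ a ^ u := Real.rpow_le_rpow_of_exponent_le ha hu
  have h4 : a - 1 ≤ a * Real.log a := sub_one_le_mul_log ha
  have h5 : 0 ≤ (v - u) * Real.log a := mul_nonneg (by linarith) hL
  -- a^v - a^u = a^u (a^{v-u} - 1) ≥ a * (v-u) * log a ≥ (a-1)(v-u)
  nlinarith [mul_le_mul_of_nonneg_left h2 (le_of_lt (lt_of_lt_of_le ha0 h3)),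
    mul_le_mul_of_nonneg_right h3 h5, mul_le_mul_of_nonneg_right h4 (sub_nonneg.2 huv)]

/-- Key chord inequality: for `a ≥ 1`, `0 ≤ x ≤ y`, `1 ≤ y`:
`a^y - a^x ≥ (a-1)(y-x)`. -/
lemma chord_ge' {a x y : ℝ} (ha : 1 ≤ a) (hx : 0 ≤ x) (hxy : x ≤ y) (hy : 1 ≤ y) :
    (a - 1) * (y - x) ≤ a ^ y - a ^ x := by
  rcases le_or_gt 1 x with hx1 | hx1
  · exact chord_ge ha hx1 hxy
  · have h1 : (a - 1) * (y - 1) ≤ a ^ y - a ^ (1:ℝ) := chord_ge ha le_rfl hy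
    have h2 : a ^ x ≤ 1 + (a - 1) * x := rpow_le_one_add_mul ha hx (le_of_lt hx1)
    rw [Real.rpow_one] at h1
    nlinarith

/-- Monotonicity of `hfun` in the first variable past 1. -/
lemma hfun_mono {β δ η x y : ℝ} (hβ : 0 < β) (hδ : 0 ≤ δ) (hη : 0 ≤ η)
    (hx : 0 ≤ x) (hxy : x ≤ y) (hy : 1 ≤ y) :
    hfun β x δ η ≤ hfun β y δ η := by
  have ha : (1:ℝ) ≤ η * β + 1 := by nlinarith
  have h := chord_ge' ha hx hxy hy
  have h2 : δ / β * ((η * β + 1 - 1) * (y - x)) ≤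
      δ / β * ((η * β + 1) ^ y - (η * β + 1) ^ x) :=
    mul_le_mul_of_nonneg_left h (div_nonneg hδ (le_of_lt hβ))
  have hb : δ / β * ((η * β + 1 - 1) * (y - x)) = η * δ * (y - x) := by
    field_simp; ring
  rw [hb] at h2
  simp only [hfun]
  linarith

/-- Nonnegativity of `hfun` for `y ≥ 1`. -/
lemma hfun_nonneg {β δ η y : ℝ} (hβ : 0 < β) (hδ : 0 ≤ δ) (hη : 0 ≤ η) (hy : 1 ≤ y) :
    0 ≤ hfun β y δ η := by
  have h := hfun_mono hβ hδ hη (by norm_num : (0:ℝ) ≤ 1) hy hy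
  have h1 : hfun β 1 δ η = 0 := by
    simp only [hfun, Real.rpow_one]
    field_simp
    ring
  linarith [h1 ▸ h]

set_option maxHeartbeats 1600000 in
theorem Gc_le_end_of_interval
    (β δ Δ η : ℝ) (hβ : 0 < β) (hδ : 0 ≤ δ) (hΔ : 0 ≤ Δ) (hη : 0 ≤ η)
    (κ₁ κ₂ q : ℕ) (hκ₁ : 1 ≤ κ₁) (hκ₂ : 1 ≤ κ₂) (hq : 1 ≤ q) :
    (∀ k : ℕ, (q - 1) * κ₁ * κ₂ ≤ k → k ≤ q * κ₁ * κ₂ →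
      Gc β δ Δ κ₁ κ₂ q k η ≤
        hfun β ((κ₁ : ℝ) * κ₂) Δ η
          + 1 / 2 * ((κ₂ : ℝ) ^ 2 + (κ₂ : ℝ) - 1) * ((κ₁ : ℝ) + 1) *
              hfun β (κ₁ : ℝ) δ η) ∧
    (δ = 0 → Δ = 0 → ∀ k : ℕ, (q - 1) * κ₁ * κ₂ ≤ k → k ≤ q * κ₁ * κ₂ →
      Gc β δ Δ κ₁ κ₂ q k η = 0) := by
  have hκ₁R : (1:ℝ) ≤ (κ₁:ℝ) := by exact_mod_cast hκ₁
  have hκ₂R : (1:ℝ) ≤ (κ₂:ℝ) := by exact_mod_cast hκ₂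
  have hκ₁0 : (0:ℝ) < (κ₁:ℝ) := by linarith
  constructor
  · intro k hk1 hk2
    -- cast the interval bounds
    have hcast : ((q - 1 : ℕ) : ℝ) = (q:ℝ) - 1 := by
      rw [Nat.cast_sub hq, Nat.cast_one]
    have hk1R : ((q:ℝ) - 1) * κ₁ * κ₂ ≤ (k:ℝ) := by
      have : (((q-1) * κ₁ * κ₂ : ℕ) : ℝ) ≤ (k:ℝ) := by exact_mod_cast hk1
      push_cast at this; rw [hcast] at this; linarith
    have hk2R : (k:ℝ) ≤ (q:ℝ) * κ₁ * κ₂ := by exact_mod_cast hk2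
    set m : ℝ := (k : ℝ) - ((q : ℝ) - 1) * κ₁ * κ₂ with hm
    have hm0 : 0 ≤ m := by simp [hm]; linarith
    have hmle : m ≤ (κ₁:ℝ) * κ₂ := by simp [hm]; nlinarith
    set p : ℤ := pceil κ₁ κ₂ q k with hp
    have hparg : (k : ℝ) / (κ₁ : ℝ) - ((q : ℝ) - 1) * (κ₂ : ℝ) = m / κ₁ := by
      field_simp [hm]; ring
    have hpc : p = ⌈m / (κ₁:ℝ)⌉ := by rw [hp, pceil, hparg]
    have hp0 : (0:ℤ) ≤ p := by
      rw [hpc]; exact Int.ceil_nonneg (div_nonneg hm0 (le_of_lt hκ₁0))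
    have hpκ₂ : (p:ℝ) ≤ (κ₂:ℝ) := by
      have : p ≤ (κ₂:ℤ) := by
        rw [hpc]
        apply Int.ceil_le.mpr
        push_cast
        rw [div_le_iff₀ hκ₁0]
        nlinarith
      exact_mod_cast this
    have hp0R : (0:ℝ) ≤ (p:ℝ) := by exact_mod_cast hp0
    have hmlep : m ≤ (p:ℝ) * κ₁ := by
      have := Int.le_ceil (m / (κ₁:ℝ))
      rw [← hpc] at this
      rw [← div_le_iff₀ hκ₁0] at *
      exact this.trans_eq (by field_simp)
    have hpltm : ((p:ℝ) - 1) * κ₁ < m := by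
      have := Int.ceil_lt_add_one (m / (κ₁:ℝ))
      rw [← hpc] at this
      have : (p:ℝ) - 1 < m / κ₁ := by linarith
      calc ((p:ℝ) - 1) * κ₁ < (m / κ₁) * κ₁ := by
            exact mul_lt_mul_of_pos_right this hκ₁0
        _ = m := by field_simp
    set x₂ : ℝ := (k : ℝ) - (((q : ℝ) - 1) * κ₂ + (p : ℝ) - 1) * κ₁ with hx₂
    have hx₂m : x₂ = m - ((p:ℝ) - 1) * κ₁ := by rw [hx₂, hm]; ring
    have hx₂0 : 0 ≤ x₂ := by rw [hx₂m]; linarith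
    have hx₂le : x₂ ≤ (κ₁:ℝ) := by rw [hx₂m]; nlinarith
    have hGc : Gc β δ Δ κ₁ κ₂ q k η =
        hfun β m Δ η + hfun β x₂ δ η
          + (κ₁ : ℝ) / 2 * ((p:ℝ) ^ 2 + (p:ℝ) - 2) * hfun β (κ₁ : ℝ) δ η := by
      unfold Gc; rw [← hp, ← hm, ← hx₂]
    have hb1 : hfun β m Δ η ≤ hfun β ((κ₁:ℝ) * κ₂) Δ η :=
      hfun_mono hβ hΔ hη hm0 hmle (le_trans hκ₁R (le_mul_of_one_le_right (by linarith) hκ₂R))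
    have hb2 : hfun β x₂ δ η ≤ hfun β (κ₁:ℝ) δ η :=
      hfun_mono hβ hδ hη hx₂0 hx₂le hκ₁R
    have hb3 : 0 ≤ hfun β (κ₁:ℝ) δ η := hfun_nonneg hβ hδ hη hκ₁R
    have hcoef : (p:ℝ) ^ 2 + (p:ℝ) - 2 ≤ (κ₂:ℝ) ^ 2 + (κ₂:ℝ) - 2 := by nlinarith
    rw [hGc]
    have hb3' : (κ₁ : ℝ) / 2 * ((p:ℝ) ^ 2 + (p:ℝ) - 2) * hfun β (κ₁ : ℝ) δ η ≤
        (κ₁ : ℝ) / 2 * ((κ₂:ℝ) ^ 2 + (κ₂:ℝ) - 2) * hfun β (κ₁ : ℝ) δ η := by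
      apply mul_le_mul_of_nonneg_right _ hb3
      apply mul_le_mul_of_nonneg_left hcoef (by linarith)
    have hgap : (1:ℝ) + (κ₁:ℝ) / 2 * ((κ₂:ℝ) ^ 2 + (κ₂:ℝ) - 2) ≤
        1 / 2 * ((κ₂ : ℝ) ^ 2 + (κ₂ : ℝ) - 1) * ((κ₁ : ℝ) + 1) := by nlinarith
    have hfin := mul_le_mul_of_nonneg_right hgap hb3
    linarith [hb1, hb2, hb3', hfin]
  · intro hδ0 hΔ0 k _ _
    simp [Gc, hfun, hδ0, hΔ0]
end

section
/- Single-client deviation bound: let F, G : ℝ^d → ℝ be differentiable with ∇F β-Lipschitz, and suppose ‖∇G(w) − ∇F(w)‖ ≤ δ for all w. Let a and b be the gradient descent sequences a(k+1) = a(k) − η∇G(a(k)) and b(k+1) = b(k) − η∇F(b(k)) with common starting point a(k₀) = b(k₀) and step size η > 0. Then for every k ≥ k₀, ‖a(k) − b(k)‖ ≤ (δ/β)((ηβ + 1)^{k − k₀} − 1). -/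
/-!
STATEMENT 9: single-client deviation bound. If ∇F is β-Lipschitz, ‖∇G − ∇F‖ ≤ δ
everywhere, and a, b are gradient descent sequences on G resp. F with common
starting point a(k₀) = b(k₀) and step size η, then
‖a(k) − b(k)‖ ≤ (δ/β)((ηβ + 1)^{k−k₀} − 1) for all k ≥ k₀.
-/

theorem single_client_deviation
    {E : Type*} [NormedAddCommGroup E] [InnerProductSpace ℝ E] [CompleteSpace E]
    (F G : E → ℝ) (β δ η : ℝ) (hβ : 0 < β) (hδ : 0 ≤ δ) (hη : 0 < η)
    (hdF : Differentiable ℝ F) (hdG : Differentiable ℝ G)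
    (hFsmooth : ∀ x y, ‖gradient F x - gradient F y‖ ≤ β * ‖x - y‖)
    (hdiv : ∀ x, ‖gradient G x - gradient F x‖ ≤ δ)
    (a b : ℕ → E) (k₀ : ℕ) (hinit : a k₀ = b k₀)
    (ha : ∀ k, k₀ ≤ k → a (k + 1) = a k - η • gradient G (a k))
    (hb : ∀ k, k₀ ≤ k → b (k + 1) = b k - η • gradient F (b k)) :
    ∀ k, k₀ ≤ k → ‖a k - b k‖ ≤ δ / β * ((η * β + 1) ^ (k - k₀) - 1) := by
  intro k hk
  induction k, hk using Nat.le_induction with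
  | base => simp [hinit, Nat.sub_self]
  | succ k hk ih =>
    have key : a (k + 1) - b (k + 1)
        = (a k - b k) - η • (gradient G (a k) - gradient F (a k))
          - η • (gradient F (a k) - gradient F (b k)) := by
      rw [ha k hk, hb k hk]
      simp [smul_sub]
      abel
    have h1 : ‖a (k + 1) - b (k + 1)‖
        ≤ ‖a k - b k‖ + η * δ + η * (β * ‖a k - b k‖) := by
      rw [key]
      calc _ ≤ ‖(a k - b k) - η • (gradient G (a k) - gradient F (a k))‖
              + ‖η • (gradient F (a k) - gradient F (b k))‖ := norm_sub_le _ _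
        _ ≤ ‖a k - b k‖ + ‖η • (gradient G (a k) - gradient F (a k))‖
              + ‖η • (gradient F (a k) - gradient F (b k))‖ := by
            gcongr; exact norm_sub_le _ _
        _ ≤ ‖a k - b k‖ + η * δ + η * (β * ‖a k - b k‖) := by
            rw [norm_smul, norm_smul, Real.norm_eq_abs, abs_of_pos hη]
            gcongr
            · exact hdiv _
            · exact hFsmooth _ _
    have hn : (k + 1) - k₀ = (k - k₀) + 1 := by omega
    rw [hn, pow_succ]
    have hne : β ≠ 0 := ne_of_gt hβ
    have hpos : (0:ℝ) ≤ η * β + 1 := by nlinarith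
    have h2 : (η * β + 1) * ‖a k - b k‖
        ≤ (η * β + 1) * (δ / β * ((η * β + 1) ^ (k - k₀) - 1)) :=
      mul_le_mul_of_nonneg_left ih hpos
    have h3 : δ / β * β = δ := div_mul_cancel₀ δ hne
    nlinarith [h1, h2]
end

section
/- Bounds on the deviation function h: for β > 0, δ ≥ 0, η ≥ 0 with ηβ ≤ 1, and every natural number x, it holds that 0 ≤ h(x, δ, η) and h(x, δ, η) ≤ δβ·2^x·η². Moreover h is nondecreasing in x: h(x, δ, η) ≤ h(y, δ, η) whenever x ≤ y. -/
/-- The deviation function h(x, δ, η) = (δ/β)((ηβ+1)^x − 1) − ηδx, natural exponent x. -/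
noncomputable def hfunN (β δ η : ℝ) (x : ℕ) : ℝ :=
  δ / β * ((η * β + 1) ^ x - 1) - η * δ * x

lemma hfun_key (a : ℝ) (ha : 0 ≤ a) (ha1 : a ≤ 1) (x : ℕ) :
    0 ≤ (1 + a) ^ x - 1 - a * x ∧
      (1 + a) ^ x - 1 - a * x ≤ a ^ 2 * (2 ^ x - 1 - x) := by
  induction x with
  | zero => simp
  | succ n ih =>
    obtain ⟨h1, h2⟩ := ih
    have hpow : (0:ℝ) ≤ (1 + a) ^ n := pow_nonneg (by linarith) n
    have h2n : (1:ℝ) + n ≤ 2 ^ n := by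
      have := one_add_mul_le_pow (a := (1:ℝ)) (by norm_num) n
      norm_num at this; linarith
    constructor
    · push_cast
      nlinarith [pow_succ (1 + a) n, pow_succ (2:ℝ) n]
    · push_cast
      nlinarith [pow_succ (1 + a) n, pow_succ (2:ℝ) n, sq_nonneg a,
        pow_nonneg (by norm_num : (0:ℝ) ≤ 2) n]

lemma hfun_eq (β δ η : ℝ) (hβ : 0 < β) (x : ℕ) :
    hfunN β δ η x = δ / β * ((1 + η * β) ^ x - 1 - (η * β) * x) := by
  unfold hfunN
  field_simp
  ring

theorem hfun_bounds (β δ η : ℝ) (hβ : 0 < β) (hδ : 0 ≤ δ) (hη : 0 ≤ η)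
    (hηβ : η * β ≤ 1) :
    (∀ x : ℕ, 0 ≤ hfunN β δ η x) ∧
    (∀ x : ℕ, hfunN β δ η x ≤ δ * β * 2 ^ x * η ^ 2) ∧
    (∀ x y : ℕ, x ≤ y → hfunN β δ η x ≤ hfunN β δ η y) := by
  set a := η * β with ha_def
  have ha : 0 ≤ a := mul_nonneg hη hβ.le
  have hc : 0 ≤ δ / β := div_nonneg hδ hβ.le
  refine ⟨?_, ?_, ?_⟩
  · intro x
    rw [hfun_eq β δ η hβ]
    exact mul_nonneg hc (hfun_key a ha hηβ x).1
  · intro x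
    rw [hfun_eq β δ η hβ]
    have h2 := (hfun_key a ha hηβ x).2
    have h2n : (1:ℝ) + x ≤ 2 ^ x := by
      have := one_add_mul_le_pow (a := (1:ℝ)) (by norm_num) x
      norm_num at this; linarith
    have hle : (1 + a) ^ x - 1 - a * x ≤ a ^ 2 * 2 ^ x := by nlinarith
    calc δ / β * ((1 + a) ^ x - 1 - a * x) ≤ δ / β * (a ^ 2 * 2 ^ x) := by
          exact mul_le_mul_of_nonneg_left hle hc
      _ = δ * β * 2 ^ x * η ^ 2 := by
          field_simp [ha_def]
          ring
  · intro x y hxy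
    rw [hfun_eq β δ η hβ, hfun_eq β δ η hβ]
    refine mul_le_mul_of_nonneg_left ?_ hc
    have mono : Monotone (fun n : ℕ => (1 + a) ^ n - 1 - a * n) := by
      apply monotone_nat_of_le_succ
      intro n
      have h1 : (1:ℝ) ≤ (1 + a) ^ n := one_le_pow₀ (by linarith)
      push_cast
      nlinarith [pow_succ (1 + a) n]
    exact mono hxy
end

section
/- Diminishing-step-size vanishing of the non-convex HierFAVG bound: fix κ₁, κ₂ ≥ 1, β, ρ > 0, δ, Δ ≥ 0 and a constant A ≥ 0. Let (η_q) be positive step sizes with η_q·β ≤ 1 for all q, Σ_{q=1}^∞ η_q = ∞ and Σ_{q=1}^∞ η_q² < ∞. Then the right-hand side of the non-convex HierFAVG bound tends to zero: (4A + 4ρ Σ_{q=1}^{B} G_nc(κ₁κ₂, η_q) + 2β² Σ_{q=1}^{B} κ₁κ₂ (G_nc(κ₁κ₂, η_q))²) / (κ₁κ₂ Σ_{q=1}^{B} η_q) → 0 as B → ∞. Consequently, under the hypotheses of the non-convex convergence theorem (each F_i ρ-Lipschitz and β-smooth, A = F(w₀) − F*), the weighted average squared gradient norm (Σ_{k=1}^{K}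 η_{q(k)} ‖∇F(w(k))‖²)/(Σ_{k=1}^{K} η_{q(k)}) of HierFAVG converges to zero as the number of cloud intervals B → ∞. -/
/-- G_nc(κ₁κ₂, η) = h(κ₁κ₂, Δ, η)
  + κ₁κ₂·((1+ηβ)^{κ₁κ₂} − 1)/((1+ηβ)^{κ₁} − 1)·h(κ₁, δ, η) + h(κ₁, δ, η). -/
noncomputable def Gnc (β δ Δ : ℝ) (κ₁ κ₂ : ℕ) (η : ℝ) : ℝ :=
  hfun β ((κ₁ : ℝ) * κ₂) Δ η
  + (κ₁ : ℝ) * κ₂ * (((1 + η * β) ^ ((κ₁ : ℝ) * κ₂) - 1) / ((1 + η * β) ^ (κ₁ : ℝ) - 1)) *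
      hfun β (κ₁ : ℝ) δ η
  + hfun β (κ₁ : ℝ) δ η

open Filter Finset Real

section Aux


open Filter Finset Real InnerProductSpace

variable {E : Type*} [NormedAddCommGroup E] [InnerProductSpace ℝ E] [CompleteSpace E]

local notation "⟪" x ", " y "⟫" => @inner ℝ _ _ x y

lemma my_norm_gradient (f : E → ℝ) (x : E) : ‖gradient f x‖ = ‖fderiv ℝ f x‖ := by
  rw [gradient]
  exact LinearIsometryEquiv.norm_map _ _

lemma my_grad_norm_le {f : E → ℝ} {ρ : ℝ} (hρ : 0 ≤ ρ)
    (hl : ∀ x y, |f x - f y| ≤ ρ * ‖x - y‖) (x : E) : ‖gradient f x‖ ≤ ρ := by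
  rw [my_norm_gradient]
  apply norm_fderiv_le_of_lip' ℝ hρ
  filter_upwards with y
  simpa [Real.norm_eq_abs] using hl y x

lemma my_gradient_sum {ι : Type*} (s : Finset ι) (p : ι → ℝ) (F : ι → E → ℝ)
    (hd : ∀ i, Differentiable ℝ (F i)) (x : E) :
    gradient (fun y => ∑ i ∈ s, p i * F i y) x = ∑ i ∈ s, p i • gradient (F i) x := by
  have hfd : fderiv ℝ (fun y => ∑ i ∈ s, p i * F i y) x
      = ∑ i ∈ s, p i • fderiv ℝ (F i) x := by
    rw [fderiv_fun_sum (fun i _ => ((hd i).differentiableAt).const_mul (p i))]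
    refine Finset.sum_congr rfl fun i _ => ?_
    exact fderiv_const_mul ((hd i).differentiableAt) (p i)
  rw [gradient, hfd, map_sum]
  refine Finset.sum_congr rfl fun i _ => ?_
  rw [map_smul]
  rfl

lemma my_descent {f : E → ℝ} {β : ℝ} (hβ : 0 ≤ β) (hd : Differentiable ℝ f)
    (hs : ∀ x y : E, ‖gradient f x - gradient f y‖ ≤ β * ‖x - y‖) (x y : E) :
    f y ≤ f x + ⟪gradient f x, y - x⟫ + β * ‖y - x‖ ^ 2 := by
  set l : E →L[ℝ] ℝ := InnerProductSpace.toDual ℝ E (gradient f x) with hl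
  have hlf : l = fderiv ℝ f x := by
    rw [hl, gradient, LinearIsometryEquiv.apply_symm_apply]
  set g : E → ℝ := fun z => f z - l z with hg
  have hgd : ∀ z, DifferentiableAt ℝ g z := fun z =>
    ((hd z).sub (l.differentiable z))
  have hgf : ∀ z, fderiv ℝ g z = fderiv ℝ f z - l := by
    intro z
    rw [hg]
    rw [fderiv_fun_sub (hd z) (l.differentiable z), l.fderiv]
  have key : |g y - g x| ≤ (β * ‖y - x‖) * ‖y - x‖ := by
    have := Convex.norm_image_sub_le_of_norm_fderiv_le (f := g) (C := β * ‖y - x‖) (s := segment ℝ x y)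
      (fun z _ => hgd z) ?_ (convex_segment x y) (left_mem_segment ℝ x y)
      (right_mem_segment ℝ x y)
    · simpa [Real.norm_eq_abs] using this
    · intro z hz
      rw [hgf z, hlf]
      have h1 : ‖fderiv ℝ f z - fderiv ℝ f x‖ = ‖gradient f z - gradient f x‖ := by
        rw [gradient, gradient, ← LinearIsometryEquiv.map_sub, LinearIsometryEquiv.norm_map]
      rw [h1]
      refine le_trans (hs z x) ?_
      obtain ⟨a, b, ha, hb, hab, rfl⟩ := hz
      have : a • x + b • y - x = b • (y - x) := by
        have : a = 1 - b := by linarith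
        rw [this]; module
      rw [this, norm_smul, Real.norm_eq_abs, abs_of_nonneg hb]
      have hb1 : b ≤ 1 := by linarith
      nlinarith [mul_nonneg (mul_nonneg hβ (by linarith : (0:ℝ) ≤ 1 - b)) (norm_nonneg (y - x))]
  have hinner : ⟪gradient f x, y - x⟫ = l y - l x := by
    rw [hl]
    simp [InnerProductSpace.toDual_apply_apply, inner_sub_right]
  have h2 : g y - g x ≤ β * ‖y - x‖ ^ 2 := by
    have := (abs_le.mp key).2
    nlinarith [norm_nonneg (y - x)]
  have : g y - g x = f y - f x - ⟪gradient f x, y - x⟫ := by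
    rw [hg, hinner]; ring
  linarith [this ▸ h2]

lemma my_pow_ub {t : ℝ} (ht0 : 0 ≤ t) (ht1 : t ≤ 1) (n : ℕ) :
    (1 + t) ^ n ≤ 1 + n * t + 4 ^ n * t ^ 2 := by
  induction n with
  | zero => simp; positivity
  | succ n ih =>
    have h4 : (n : ℝ) ≤ 2 * 4 ^ n := by
      have : (n : ℝ) ≤ 4 ^ n := by
        have := Nat.lt_pow_self (n := n) (by norm_num : 1 < 4)
        exact_mod_cast this.le
      nlinarith [pow_pos (by norm_num : (0:ℝ) < 4) n]
    have h1t : (0:ℝ) ≤ 1 + t := by linarith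
    calc (1 + t) ^ (n + 1) = (1 + t) ^ n * (1 + t) := by ring
    _ ≤ (1 + n * t + 4 ^ n * t ^ 2) * (1 + t) := by
        apply mul_le_mul_of_nonneg_right ih h1t
    _ ≤ 1 + (n + 1 : ℕ) * t + 4 ^ (n + 1) * t ^ 2 := by
        have h45 : (4:ℝ) ^ (n + 1) = 4 * 4 ^ n := by ring
        rw [h45]
        push_cast
        nlinarith [pow_pos (by norm_num : (0:ℝ) < 4) n, sq_nonneg t,
          mul_nonneg (sq_nonneg t) (by linarith : (0:ℝ) ≤ 2 * 4 ^ n - n),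
          mul_nonneg (mul_nonneg (pow_pos (by norm_num : (0:ℝ) < 4) n).le
            (sq_nonneg t)) (by linarith : (0:ℝ) ≤ 1 - t)]

lemma my_hfun_bounds {β δ η : ℝ} (hβ : 0 < β) (hδ : 0 ≤ δ) (hη : 0 < η)
    (hηβ : η * β ≤ 1) (j : ℕ) :
    0 ≤ hfun β (j : ℝ) δ η ∧ hfun β (j : ℝ) δ η ≤ δ * β * 4 ^ j * η ^ 2 := by
  set t := η * β with hts
  have ht0 : 0 < t := mul_pos hη hβ
  have hrw : hfun β (j : ℝ) δ η = δ / β * ((1 + t) ^ j - 1 - j * t) := by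
    rw [hfun, Real.rpow_natCast (η * β + 1) j]
    have hb : η * β + 1 = 1 + t := by rw [hts]; ring
    rw [hb]
    have : η * δ * (j : ℝ) = δ / β * ((j : ℝ) * t) := by
      field_simp [hts]; ring
    rw [this]; ring
  have hlb : 1 + (j : ℝ) * t ≤ (1 + t) ^ j := by
    have := one_add_mul_le_pow (by linarith : (-2 : ℝ) ≤ t) j
    linarith
  have hub := my_pow_ub ht0.le hηβ j
  constructor
  · rw [hrw]
    apply mul_nonneg (div_nonneg hδ hβ.le)
    linarith
  · rw [hrw]
    have : (1 + t) ^ j - 1 - j * t ≤ 4 ^ j * t ^ 2 := by linarith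
    calc δ / β * ((1 + t) ^ j - 1 - j * t) ≤ δ / β * (4 ^ j * t ^ 2) :=
          mul_le_mul_of_nonneg_left this (div_nonneg hδ hβ.le)
    _ = δ * β * 4 ^ j * η ^ 2 := by field_simp [hts]; ring

lemma my_Gnc_bound (β δ Δ : ℝ) (κ₁ κ₂ : ℕ) (hκ₁ : 1 ≤ κ₁) (hκ₂ : 1 ≤ κ₂)
    (hβ : 0 < β) (hδ : 0 ≤ δ) (hΔ : 0 ≤ Δ) :
    ∃ C : ℝ, 0 ≤ C ∧ ∀ η : ℝ, 0 < η → η * β ≤ 1 →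
      0 ≤ Gnc β δ Δ κ₁ κ₂ η ∧ Gnc β δ Δ κ₁ κ₂ η ≤ C * η ^ 2 := by
  set n := κ₁ * κ₂ with hn
  refine ⟨(Δ + ((n : ℝ) * ((n : ℝ) + 4 ^ n) + 1) * δ) * β * 4 ^ n, ?_, ?_⟩
  · have h4 : (0:ℝ) ≤ 4 ^ n := by positivity
    have hn0 : (0:ℝ) ≤ (n:ℝ) := Nat.cast_nonneg n
    positivity
  intro η hη hηβ
  set t := η * β with hts
  have ht0 : 0 < t := mul_pos hη hβ
  have hκ₁n : κ₁ ≤ n := Nat.le_mul_of_pos_right κ₁ hκ₂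
  have hcast : ((κ₁ : ℝ) * κ₂) = ((n : ℕ) : ℝ) := by push_cast [hn]; ring
  -- ratio analysis
  have hbase : 1 + η * β = 1 + t := by rw [hts]
  have hnum_eq : (1 + η * β) ^ ((κ₁ : ℝ) * κ₂) = (1 + t) ^ n := by
    rw [hcast, Real.rpow_natCast, hbase]
  have hden_eq : (1 + η * β) ^ (κ₁ : ℝ) = (1 + t) ^ κ₁ := by
    rw [Real.rpow_natCast, hbase]
  have hlbn : ∀ j : ℕ, 1 + (j : ℝ) * t ≤ (1 + t) ^ j := fun j => by
    have := one_add_mul_le_pow (by linarith : (-2 : ℝ) ≤ t) j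
    linarith
  have hden_pos : 0 < (1 + t) ^ κ₁ - 1 := by
    have := hlbn κ₁
    have : 1 + t ≤ (1 + t) ^ κ₁ := by
      have h := hlbn κ₁
      have : (1:ℝ) ≤ (κ₁ : ℝ) := by exact_mod_cast hκ₁
      nlinarith
    linarith
  have hden_ge : t ≤ (1 + t) ^ κ₁ - 1 := by
    have h := hlbn κ₁
    have h1 : (1:ℝ) ≤ (κ₁ : ℝ) := by exact_mod_cast hκ₁
    nlinarith
  have hnum_nn : 0 ≤ (1 + t) ^ n - 1 := by
    have := hlbn n
    have : (0:ℝ) ≤ (n:ℝ) := Nat.cast_nonneg n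
    nlinarith [hlbn n, Nat.cast_nonneg (α := ℝ) n, ht0.le]
  have hnum_ub : (1 + t) ^ n - 1 ≤ ((n : ℝ) + 4 ^ n) * t := by
    have h := my_pow_ub ht0.le hηβ n
    nlinarith [mul_nonneg (mul_nonneg (pow_pos (by norm_num : (0:ℝ) < 4) n).le ht0.le)
      (by linarith : (0:ℝ) ≤ 1 - t)]
  have hratio_nn : 0 ≤ ((1 + t) ^ n - 1) / ((1 + t) ^ κ₁ - 1) :=
    div_nonneg hnum_nn hden_pos.le
  have hratio_ub : ((1 + t) ^ n - 1) / ((1 + t) ^ κ₁ - 1) ≤ (n : ℝ) + 4 ^ n := by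
    rw [div_le_iff₀ hden_pos]
    calc (1 + t) ^ n - 1 ≤ ((n : ℝ) + 4 ^ n) * t := hnum_ub
    _ ≤ ((n : ℝ) + 4 ^ n) * ((1 + t) ^ κ₁ - 1) := by
        apply mul_le_mul_of_nonneg_left hden_ge
        positivity
  have hΔb := my_hfun_bounds hβ hΔ hη hηβ (j := n)
  have hδb := my_hfun_bounds hβ hδ hη hηβ (j := κ₁)
  have h4mn : (4:ℝ) ^ κ₁ ≤ 4 ^ n := pow_le_pow_right₀ (by norm_num) hκ₁n
  have hδb' : hfun β (κ₁ : ℝ) δ η ≤ δ * β * 4 ^ n * η ^ 2 := by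
    refine le_trans hδb.2 ?_
    have : δ * β * 4 ^ κ₁ ≤ δ * β * 4 ^ n := by nlinarith [mul_nonneg hδ hβ.le]
    nlinarith [sq_nonneg η]
  have hGnc : Gnc β δ Δ κ₁ κ₂ η
      = hfun β ((n:ℕ) : ℝ) Δ η
        + (n : ℝ) * (((1 + t) ^ n - 1) / ((1 + t) ^ κ₁ - 1)) * hfun β (κ₁ : ℝ) δ η
        + hfun β (κ₁ : ℝ) δ η := by
    rw [Gnc, hnum_eq, hden_eq, hcast]
  have hΔ0 := hΔb.1
  have hΔ1 : hfun β ((n:ℕ):ℝ) Δ η ≤ Δ * β * 4 ^ n * η ^ 2 := hΔb.2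
  have hδ0 := hδb.1
  have hmid_nn : 0 ≤ (n : ℝ) * (((1 + t) ^ n - 1) / ((1 + t) ^ κ₁ - 1)) * hfun β (κ₁ : ℝ) δ η := by
    apply mul_nonneg (mul_nonneg (Nat.cast_nonneg n) hratio_nn) hδ0
  have hmid_ub : (n : ℝ) * (((1 + t) ^ n - 1) / ((1 + t) ^ κ₁ - 1)) * hfun β (κ₁ : ℝ) δ η
      ≤ (n : ℝ) * ((n : ℝ) + 4 ^ n) * (δ * β * 4 ^ n * η ^ 2) := by
    have h1 : (n : ℝ) * (((1 + t) ^ n - 1) / ((1 + t) ^ κ₁ - 1)) ≤ (n : ℝ) * ((n : ℝ) + 4 ^ n) := by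
      apply mul_le_mul_of_nonneg_left hratio_ub (Nat.cast_nonneg n)
    apply mul_le_mul h1 hδb' hδ0
    positivity
  constructor
  · rw [hGnc]; linarith
  · rw [hGnc]
    have : (Δ + ((n : ℝ) * ((n : ℝ) + 4 ^ n) + 1) * δ) * β * 4 ^ n * η ^ 2
        = Δ * β * 4 ^ n * η ^ 2 + (n : ℝ) * ((n : ℝ) + 4 ^ n) * (δ * β * 4 ^ n * η ^ 2)
          + δ * β * 4 ^ n * η ^ 2 := by ring
    rw [this]
    linarith



open Filter Finset

lemma my_sum_div_blocks (K : ℕ) (hK : 0 < K) (f : ℕ → ℝ) (B : ℕ) :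
    ∑ k ∈ Finset.range (B * K), f (k / K) = K * ∑ m ∈ Finset.range B, f m := by
  induction B with
  | zero => simp
  | succ B ih =>
    have h1 : (B + 1) * K = B * K + K := by ring
    rw [h1, Finset.range_eq_Ico, ← Finset.sum_Ico_consecutive _ (Nat.zero_le _)
      (Nat.le_add_right _ _), ← Finset.range_eq_Ico, ih]
    have h2 : ∑ k ∈ Finset.Ico (B * K) (B * K + K), f (k / K) = K * f B := by
      have : ∀ k ∈ Finset.Ico (B * K) (B * K + K), f (k / K) = f B := by
        intro k hk
        rw [Finset.mem_Ico] at hk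
        congr 1
        exact Nat.div_eq_of_lt_le (by omega) (by omega)
      rw [Finset.sum_congr rfl this, Finset.sum_const, Nat.card_Ico]
      simp [mul_comm]
    rw [h2, Finset.sum_range_succ]
    ring

lemma my_sum_Icc_one (f : ℕ → ℝ) (B : ℕ) :
    ∑ q ∈ Finset.Icc 1 B, f q = ∑ m ∈ Finset.range B, f (m + 1) := by
  induction B with
  | zero => simp
  | succ B ih =>
    rw [Finset.sum_Icc_succ_top (by omega : 1 ≤ B + 1), ih, Finset.sum_range_succ]

lemma my_telescope (φ a b : ℕ → ℝ) (h : ∀ k, a k ≤ φ k - φ (k + 1) + b k) (n : ℕ) :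
    ∑ k ∈ Finset.range n, a k ≤ φ 0 - φ n + ∑ k ∈ Finset.range n, b k := by
  induction n with
  | zero => simp
  | succ n ih =>
    rw [Finset.sum_range_succ, Finset.sum_range_succ]
    have := h n
    linarith

lemma my_quot_tendsto_zero {num den : ℕ → ℝ} {M : ℝ}
    (h0 : ∀ B, 0 ≤ num B) (hM : ∀ B, num B ≤ M)
    (hd : Tendsto den atTop atTop) :
    Tendsto (fun B => num B / den B) atTop (nhds 0) := by
  have hden_pos : ∀ᶠ B in atTop, 0 < den B := hd.eventually_gt_atTop 0
  have hMd : Tendsto (fun B => M / den B) atTop (nhds 0) :=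
    Tendsto.div_atTop tendsto_const_nhds hd
  apply squeeze_zero' (hden_pos.mono fun B hB => div_nonneg (h0 B) hB.le)
    (hden_pos.mono fun B hB => by
      exact (div_le_div_iff_of_pos_right hB).mpr (hM B)) hMd

end Aux

set_option maxHeartbeats 2000000 in
theorem diminishing_stepsize_nonconvex_bound
    {E : Type*} [NormedAddCommGroup E] [InnerProductSpace ℝ E] [CompleteSpace E]
    {N L : ℕ}
    -- fixed parameters and constant A ≥ 0
    (κ₁ κ₂ : ℕ) (hκ₁ : 1 ≤ κ₁) (hκ₂ : 1 ≤ κ₂)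
    (β ρ δ Δ A : ℝ) (hβ : 0 < β) (hρ : 0 < ρ) (hδpos : 0 ≤ δ) (hΔpos : 0 ≤ Δ)
    (hA : 0 ≤ A)
    -- diminishing step sizes
    (ηs : ℕ → ℝ) (hηpos : ∀ q, 0 < ηs q) (hηβ : ∀ q, ηs q * β ≤ 1)
    (hdiverge : Filter.Tendsto (fun B => ∑ q ∈ Finset.Icc 1 B, ηs q)
      Filter.atTop Filter.atTop)
    (hsq : Summable (fun q => ηs q ^ 2))
    -- HierFAVG setting: client weights and client-to-edge assignment
    (p : Fin N → ℝ) (hp : ∀ i, 0 < p i) (hpsum : ∑ i, p i = 1)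
    (e : Fin N → Fin L)
    (P : Fin L → ℝ) (hP : ∀ ℓ, P ℓ = ∑ i ∈ Finset.univ.filter (fun i => e i = ℓ), p i)
    -- client losses, edge losses, global loss
    (F : Fin N → E → ℝ)
    (Fe : Fin L → E → ℝ)
    (hFe : ∀ ℓ, Fe ℓ = fun x => (∑ i ∈ Finset.univ.filter (fun i => e i = ℓ), p i * F i x) / P ℓ)
    (Fg : E → ℝ) (hFg : Fg = fun x => ∑ i, p i * F i x)
    -- ρ-Lipschitz continuity and β-smoothness of every client loss
    (hdiff : ∀ i, Differentiable ℝ (F i))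
    (hlip : ∀ i x y, |F i x - F i y| ≤ ρ * ‖x - y‖)
    (hsmooth : ∀ i x y, ‖gradient (F i) x - gradient (F i) y‖ ≤ β * ‖x - y‖)
    -- minimum of the global loss, with A = F(w₀) − F*
    (wstar : E) (hstar : ∀ x, Fg wstar ≤ Fg x)
    -- gradient divergences
    (δi : Fin N → ℝ) (Δl : Fin L → ℝ)
    (hδi : ∀ i x, ‖gradient (F i) x - gradient (Fe (e i)) x‖ ≤ δi i)
    (hΔl : ∀ ℓ x, ‖gradient (Fe ℓ) x - gradient Fg x‖ ≤ Δl ℓ)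
    (hδ : δ = ∑ i, p i * δi i) (hΔ : Δ = ∑ ℓ, P ℓ * Δl ℓ)
    -- the index q(k) of the cloud interval containing iteration k
    (qidx : ℕ → ℕ) (hqidx : ∀ k, qidx k = (k - 1) / (κ₁ * κ₂) + 1)
    -- initialization at w₀ and local iterates with their weighted average
    (w₀ : E) (w : ℕ → Fin N → E) (hw0 : ∀ i, w 0 i = w₀)
    (hA' : A = Fg w₀ - Fg wstar)
    (wbar : ℕ → E) (hwbar : ∀ k, wbar k = ∑ i, p i • w k i)
    (hlocal : ∀ k i, ¬ (κ₁ ∣ (k + 1)) →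
      w (k + 1) i = w k i - ηs (qidx (k + 1)) • gradient (F i) (w k i))
    (hedge : ∀ k i, κ₁ ∣ (k + 1) → ¬ (κ₁ * κ₂ ∣ (k + 1)) →
      w (k + 1) i = (P (e i))⁻¹ •
        ∑ j ∈ Finset.univ.filter (fun j => e j = e i),
          p j • (w k j - ηs (qidx (k + 1)) • gradient (F j) (w k j)))
    (hcloud : ∀ k i, κ₁ * κ₂ ∣ (k + 1) →
      w (k + 1) i = ∑ j, p j • (w k j - ηs (qidx (k + 1)) • gradient (F j) (w k j))) :
    -- (1) the right-hand side of the non-convex bound tends to zero, and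
    -- (2) the weighted average squared gradient norm of HierFAVG tends to zero
    Filter.Tendsto (fun B =>
        (4 * A + 4 * ρ * (∑ q ∈ Finset.Icc 1 B, Gnc β δ Δ κ₁ κ₂ (ηs q))
          + 2 * β ^ 2 * (∑ q ∈ Finset.Icc 1 B, (κ₁ : ℝ) * κ₂ * (Gnc β δ Δ κ₁ κ₂ (ηs q)) ^ 2))
          / ((κ₁ : ℝ) * κ₂ * ∑ q ∈ Finset.Icc 1 B, ηs q))
      Filter.atTop (nhds 0) ∧
    Filter.Tendsto (fun B =>
        (∑ k ∈ Finset.Icc 1 (B * κ₁ * κ₂), ηs (qidx k) * ‖gradient Fg (wbar k)‖ ^ 2) /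
          (∑ k ∈ Finset.Icc 1 (B * κ₁ * κ₂), ηs (qidx k)))
      Filter.atTop (nhds 0) := by
  classical
  have hN : 0 < N := by
    rcases Nat.eq_zero_or_pos N with h | h
    · subst h; simp at hpsum
    · exact h
  set K := κ₁ * κ₂ with hKdef
  have hKpos : 0 < K := Nat.mul_pos hκ₁ hκ₂
  have hKR : (0:ℝ) < (K : ℝ) := by exact_mod_cast hKpos
  have hqs : ∀ k : ℕ, qidx (k + 1) = k / K + 1 := by
    intro k; rw [hqidx]; simp [hKdef]
  set η' : ℕ → ℝ := fun k => ηs (k / K + 1) with hη'def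
  have hη'pos : ∀ k, 0 < η' k := fun k => hηpos _
  have hη'β : ∀ k, η' k * β ≤ 1 := fun k => hηβ _
  have hqsη : ∀ k : ℕ, ηs (qidx (k + 1)) = η' k := fun k => by rw [hqs]
  -- gradient norm bounds
  have hgradρ : ∀ i x, ‖gradient (F i) x‖ ≤ ρ :=
    fun i x => my_grad_norm_le hρ.le (hlip i) x
  have hFgd : Differentiable ℝ Fg := by
    rw [hFg]
    exact Differentiable.fun_sum (fun i _ => (hdiff i).const_mul (p i))
  have hgradFg : ∀ x, gradient Fg x = ∑ i, p i • gradient (F i) x := by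
    intro x; rw [hFg]; exact my_gradient_sum Finset.univ p F hdiff x
  -- weighted average bound helper
  have havg : ∀ (s : Finset (Fin N)) (v : Fin N → E) (bnd : ℝ),
      (∀ j ∈ s, ‖v j‖ ≤ bnd) → ‖∑ j ∈ s, p j • v j‖ ≤ (∑ j ∈ s, p j) * bnd := by
    intro s v bnd hv
    calc ‖∑ j ∈ s, p j • v j‖ ≤ ∑ j ∈ s, ‖p j • v j‖ := norm_sum_le _ _
    _ ≤ ∑ j ∈ s, p j * bnd := Finset.sum_le_sum (fun j hj => by
        rw [norm_smul, Real.norm_eq_abs, abs_of_pos (hp j)]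
        exact mul_le_mul_of_nonneg_left (hv j hj) (hp j).le)
    _ = (∑ j ∈ s, p j) * bnd := (Finset.sum_mul _ _ _).symm
  have hcenterS : ∀ (s : Finset (Fin N)) (v : Fin N → E) (c : E),
      ∑ j ∈ s, p j • (v j - c) = ∑ j ∈ s, p j • v j - (∑ j ∈ s, p j) • c := by
    intro s v c
    rw [Finset.sum_smul, ← Finset.sum_sub_distrib]
    exact Finset.sum_congr rfl fun j _ => smul_sub _ _ _
  have hgFgρ : ∀ x, ‖gradient Fg x‖ ≤ ρ := by
    intro x
    rw [hgradFg]
    have := havg Finset.univ (fun i => gradient (F i) x) ρ (fun j _ => hgradρ j x)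
    rwa [hpsum, one_mul] at this
  have hsFg : ∀ x y, ‖gradient Fg x - gradient Fg y‖ ≤ β * ‖x - y‖ := by
    intro x y
    rw [hgradFg, hgradFg, ← Finset.sum_sub_distrib]
    have h1 : ∀ i : Fin N, p i • gradient (F i) x - p i • gradient (F i) y
        = p i • (gradient (F i) x - gradient (F i) y) := fun i => (smul_sub _ _ _).symm
    simp_rw [h1]
    have := havg Finset.univ (fun i => gradient (F i) x - gradient (F i) y)
      (β * ‖x - y‖) (fun j _ => hsmooth j x y)
    rwa [hpsum, one_mul] at this
  have hdesc := my_descent hβ.le hFgd hsFg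
  -- the average descent direction
  set g : ℕ → E := fun k => ∑ i, p i • gradient (F i) (w k i) with hgdef
  have hgρ : ∀ k, ‖g k‖ ≤ ρ := by
    intro k
    have := havg Finset.univ (fun i => gradient (F i) (w k i)) ρ (fun j _ => hgradρ j _)
    rwa [hpsum, one_mul] at this
  -- key sum identity
  have key_sum : ∀ k : ℕ,
      ∑ j, p j • (w k j - ηs (qidx (k + 1)) • gradient (F j) (w k j))
        = wbar k - ηs (qidx (k + 1)) • g k := by
    intro k
    rw [hwbar, hgdef]
    rw [Finset.smul_sum]
    rw [← Finset.sum_sub_distrib]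
    refine Finset.sum_congr rfl fun j _ => ?_
    rw [smul_sub, smul_comm]
  -- recursion for the averaged iterate
  have hrec : ∀ k : ℕ, wbar (k + 1) = wbar k - ηs (qidx (k + 1)) • g k := by
    intro k
    by_cases hc : κ₁ * κ₂ ∣ (k + 1)
    · rw [hwbar (k + 1)]
      have h1 : ∀ i : Fin N, w (k + 1) i
          = ∑ j, p j • (w k j - ηs (qidx (k + 1)) • gradient (F j) (w k j)) :=
        fun i => hcloud k i hc
      simp_rw [h1]
      rw [← Finset.sum_smul, hpsum, one_smul]
      exact key_sum k
    · by_cases he : κ₁ ∣ (k + 1)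
      · rw [hwbar (k + 1)]
        have h1 : ∀ i : Fin N, w (k + 1) i = (P (e i))⁻¹ •
            ∑ j ∈ Finset.univ.filter (fun j => e j = e i),
              p j • (w k j - ηs (qidx (k + 1)) • gradient (F j) (w k j)) :=
          fun i => hedge k i he hc
        simp_rw [h1]
        set u : Fin N → E := fun j => w k j - ηs (qidx (k + 1)) • gradient (F j) (w k j)
          with hudef
        set S : Fin L → E := fun ℓ => ∑ j ∈ Finset.univ.filter (fun j => e j = ℓ), p j • u j
          with hSdef
        have h2 : ∑ i, p i • (P (e i))⁻¹ • S (e i)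
            = ∑ ℓ, ∑ i ∈ Finset.univ.filter (fun i => e i = ℓ), p i • (P (e i))⁻¹ • S (e i) :=
          (Finset.sum_fiberwise Finset.univ e _).symm
        have h3 : ∀ ℓ : Fin L,
            ∑ i ∈ Finset.univ.filter (fun i => e i = ℓ), p i • (P (e i))⁻¹ • S (e i)
              = S ℓ := by
          intro ℓ
          have h4 : ∑ i ∈ Finset.univ.filter (fun i => e i = ℓ), p i • (P (e i))⁻¹ • S (e i)
              = ∑ i ∈ Finset.univ.filter (fun i => e i = ℓ), p i • (P ℓ)⁻¹ • S ℓ := by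
            refine Finset.sum_congr rfl fun i hi => ?_
            rw [(Finset.mem_filter.mp hi).2]
          rw [h4, ← Finset.sum_smul, ← hP ℓ]
          by_cases hPz : P ℓ = 0
          · have hfe : Finset.univ.filter (fun j => e j = ℓ) = ∅ := by
              by_contra hne
              obtain ⟨i, hi⟩ := Finset.nonempty_iff_ne_empty.mpr hne
              have hpos : 0 < ∑ j ∈ Finset.univ.filter (fun j => e j = ℓ), p j :=
                Finset.sum_pos (fun j _ => hp j) ⟨i, hi⟩
              rw [hP ℓ] at hPz
              rw [hPz] at hpos
              exact lt_irrefl 0 hpos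
            rw [hSdef]
            simp only [hfe, Finset.sum_empty]
            rw [hP ℓ, hfe]
            simp
          · rw [smul_smul, mul_inv_cancel₀ hPz, one_smul]
        rw [h2, Finset.sum_congr rfl (fun ℓ _ => h3 ℓ), hSdef]
        rw [Finset.sum_fiberwise Finset.univ e (fun j => p j • u j)]
        exact key_sum k
      · rw [hwbar (k + 1)]
        have h1 : ∀ i : Fin N, w (k + 1) i
            = w k i - ηs (qidx (k + 1)) • gradient (F i) (w k i) :=
          fun i => hlocal k i he
        simp_rw [h1]
        exact key_sum k
  have hwbar0 : wbar 0 = w₀ := by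
    rw [hwbar]
    simp_rw [hw0]
    rw [← Finset.sum_smul, hpsum, one_smul]
  have hsync : ∀ (m : ℕ) (i : Fin N), w (K * m) i = wbar (K * m) := by
    intro m i
    cases m with
    | zero => rw [Nat.mul_zero, hw0, hwbar0]
    | succ m =>
      have hx : K * (m + 1) = K * m + K := by ring
      have hkk : K * (m + 1) = (K * m + K - 1) + 1 := by omega
      have hdiv : κ₁ * κ₂ ∣ ((K * m + K - 1) + 1) := by
        rw [← hkk, hKdef]
        exact Dvd.intro (m + 1) rfl
      rw [hkk, hcloud _ i hdiv, hwbar]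
      have h1 : ∀ i' : Fin N, w ((K * m + K - 1) + 1) i'
          = ∑ j, p j • (w (K * m + K - 1) j
            - ηs (qidx ((K * m + K - 1) + 1)) • gradient (F j) (w (K * m + K - 1) j)) :=
        fun i' => hcloud _ i' hdiv
      simp_rw [h1]
      rw [← Finset.sum_smul, hpsum, one_smul]
  have hdrift : ∀ (m r : ℕ), r ≤ K → ∀ i : Fin N,
      ‖w (K * m + r) i - wbar (K * m)‖ ≤ (r : ℝ) * ηs (m + 1) * ρ := by
    intro m r
    induction r with
    | zero =>
      intro _ i
      rw [Nat.add_zero, hsync m i]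
      simp
    | succ r ih =>
      intro hr i
      have hrK : r < K := by omega
      have ihr := ih (by omega)
      have hη0 : (0:ℝ) ≤ ηs (m + 1) := (hηpos _).le
      have hq1 : qidx ((K * m + r) + 1) = m + 1 := by
        rw [hqs]
        congr 1
        rw [Nat.mul_add_div hKpos, Nat.div_eq_of_lt hrK]
        omega
      have bound_u : ∀ j : Fin N,
          ‖w (K * m + r) j - ηs (qidx ((K * m + r) + 1)) • gradient (F j) (w (K * m + r) j)
            - wbar (K * m)‖ ≤ ((r : ℝ) + 1) * ηs (m + 1) * ρ := by
        intro j
        rw [hq1]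
        have h1 := ihr j
        have h2 : ‖ηs (m + 1) • gradient (F j) (w (K * m + r) j)‖ ≤ ηs (m + 1) * ρ := by
          rw [norm_smul, Real.norm_eq_abs, abs_of_nonneg hη0]
          exact mul_le_mul_of_nonneg_left (hgradρ j _) hη0
        have h3 : w (K * m + r) j - ηs (m + 1) • gradient (F j) (w (K * m + r) j)
            - wbar (K * m)
            = (w (K * m + r) j - wbar (K * m))
              - ηs (m + 1) • gradient (F j) (w (K * m + r) j) := by abel
        rw [h3]
        have := norm_sub_le (w (K * m + r) j - wbar (K * m))
          (ηs (m + 1) • gradient (F j) (w (K * m + r) j))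
        nlinarith
      have hsucc : K * m + (r + 1) = (K * m + r) + 1 := by omega
      rw [hsucc]
      by_cases hc : κ₁ * κ₂ ∣ ((K * m + r) + 1)
      · rw [hcloud _ i hc]
        have h4 : ∑ j, p j • (w (K * m + r) j
              - ηs (qidx ((K * m + r) + 1)) • gradient (F j) (w (K * m + r) j))
            - wbar (K * m)
            = ∑ j, p j • (w (K * m + r) j
              - ηs (qidx ((K * m + r) + 1)) • gradient (F j) (w (K * m + r) j)
              - wbar (K * m)) := by
          rw [hcenterS, hpsum, one_smul]
        rw [h4]
        have h5 := havg Finset.univ _ (((r : ℝ) + 1) * ηs (m + 1) * ρ)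
          (fun j _ => bound_u j)
        rw [hpsum, one_mul] at h5
        push_cast
        exact h5
      · by_cases he : κ₁ ∣ ((K * m + r) + 1)
        · rw [hedge _ i he hc]
          have hPl : 0 < P (e i) := by
            rw [hP]
            refine Finset.sum_pos (fun j _ => hp j) ⟨i, ?_⟩
            simp
          have hsum_p : ∑ j ∈ Finset.univ.filter (fun j => e j = e i), p j = P (e i) :=
            (hP (e i)).symm
          have h4 : (P (e i))⁻¹ • (∑ j ∈ Finset.univ.filter (fun j => e j = e i),
                p j • (w (K * m + r) j
                  - ηs (qidx ((K * m + r) + 1)) • gradient (F j) (w (K * m + r) j)))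
              - wbar (K * m)
              = (P (e i))⁻¹ • ∑ j ∈ Finset.univ.filter (fun j => e j = e i),
                p j • (w (K * m + r) j
                  - ηs (qidx ((K * m + r) + 1)) • gradient (F j) (w (K * m + r) j)
                  - wbar (K * m)) := by
            rw [hcenterS, hsum_p, smul_sub, smul_smul, inv_mul_cancel₀ hPl.ne', one_smul]
          rw [h4, norm_smul, Real.norm_eq_abs, abs_of_pos (inv_pos.mpr hPl)]
          have h5 := havg (Finset.univ.filter (fun j => e j = e i)) _
            (((r : ℝ) + 1) * ηs (m + 1) * ρ) (fun j _ => bound_u j)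
          rw [hsum_p] at h5
          have h6 : (P (e i))⁻¹ * ‖∑ j ∈ Finset.univ.filter (fun j => e j = e i),
                p j • (w (K * m + r) j
                  - ηs (qidx ((K * m + r) + 1)) • gradient (F j) (w (K * m + r) j)
                  - wbar (K * m))‖
              ≤ (P (e i))⁻¹ * (P (e i) * (((r : ℝ) + 1) * ηs (m + 1) * ρ)) :=
            mul_le_mul_of_nonneg_left h5 (inv_pos.mpr hPl).le
          rw [inv_mul_cancel_left₀ hPl.ne'] at h6
          push_cast
          exact h6
        · rw [hlocal _ i he]
          have := bound_u i
          push_cast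
          exact this
  have hdriftbar : ∀ (m r : ℕ), r ≤ K →
      ‖wbar (K * m + r) - wbar (K * m)‖ ≤ (r : ℝ) * ηs (m + 1) * ρ := by
    intro m r hr
    rw [hwbar (K * m + r)]
    have h4 : ∑ i, p i • w (K * m + r) i - wbar (K * m)
        = ∑ i, p i • (w (K * m + r) i - wbar (K * m)) := by
      rw [hcenterS, hpsum, one_smul]
    rw [h4]
    have h5 := havg Finset.univ _ ((r : ℝ) * ηs (m + 1) * ρ)
      (fun j _ => hdrift m r hr j)
    rwa [hpsum, one_mul] at h5
  -- per-step descent inequality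
  set Cs := β * ρ ^ 2 * (2 * (K : ℝ) + 1) with hCsdef
  have hCs0 : 0 ≤ Cs := by positivity
  have hmove : ∀ k : ℕ, wbar (k + 1) - wbar k = -(η' k • g k) := by
    intro k
    rw [hrec k, hqsη k, sub_sub_cancel_left]
  have hnrm : ∀ k : ℕ, ‖wbar (k + 1) - wbar k‖ ≤ η' k * ρ := by
    intro k
    rw [hmove k, norm_neg, norm_smul, Real.norm_eq_abs, abs_of_pos (hη'pos k)]
    exact mul_le_mul_of_nonneg_left (hgρ k) (hη'pos k).le
  have hstep : ∀ k : ℕ, η' k * ‖gradient Fg (wbar k)‖ ^ 2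
      ≤ Fg (wbar k) - Fg (wbar (k + 1)) + Cs * (η' k) ^ 2 := by
    intro k
    have hkmr : K * (k / K) + k % K = k := Nat.div_add_mod k K
    have hrK : k % K ≤ K := (Nat.mod_lt k hKpos).le
    have hmη : ηs (k / K + 1) = η' k := by rw [hη'def]
    have hdist : ∀ i, ‖w k i - wbar k‖ ≤ 2 * (K : ℝ) * η' k * ρ := by
      intro i
      have h1 := hdrift (k / K) (k % K) hrK i
      have h2 := hdriftbar (k / K) (k % K) hrK
      rw [hkmr, hmη] at h1 h2
      have h3 : ‖w k i - wbar k‖ ≤ ‖w k i - wbar (K * (k / K))‖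
          + ‖wbar k - wbar (K * (k / K))‖ := by
        have h4 : w k i - wbar k = (w k i - wbar (K * (k / K)))
            - (wbar k - wbar (K * (k / K))) := by abel
        rw [h4]; exact norm_sub_le _ _
      have hrcast : ((k % K : ℕ) : ℝ) ≤ (K : ℝ) := by exact_mod_cast hrK
      nlinarith [mul_nonneg (hη'pos k).le hρ.le]
    have hgG : ‖g k - gradient Fg (wbar k)‖ ≤ β * (2 * (K : ℝ) * η' k * ρ) := by
      rw [hgradFg, hgdef, ← Finset.sum_sub_distrib]
      have h1 : ∀ i : Fin N, p i • gradient (F i) (w k i) - p i • gradient (F i) (wbar k)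
          = p i • (gradient (F i) (w k i) - gradient (F i) (wbar k)) :=
        fun i => (smul_sub _ _ _).symm
      simp_rw [h1]
      have h2 := havg Finset.univ _ (β * (2 * (K : ℝ) * η' k * ρ))
        (fun j _ => le_trans (hsmooth j _ _) (mul_le_mul_of_nonneg_left (hdist j) hβ.le))
      rwa [hpsum, one_mul] at h2
    have hd1 := hdesc (wbar k) (wbar (k + 1))
    have hinner : (inner ℝ (gradient Fg (wbar k)) (wbar (k + 1) - wbar k) : ℝ)
        = -(η' k * inner ℝ (gradient Fg (wbar k)) (g k)) := by
      rw [hmove k, inner_neg_right, real_inner_smul_right]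
    have hip2 : (inner ℝ (gradient Fg (wbar k)) (g k) : ℝ)
        = ‖gradient Fg (wbar k)‖ ^ 2
          + inner ℝ (gradient Fg (wbar k)) (g k - gradient Fg (wbar k)) := by
      rw [inner_sub_right, real_inner_self_eq_norm_sq]
      ring
    have hCS : |(inner ℝ (gradient Fg (wbar k)) (g k - gradient Fg (wbar k)) : ℝ)|
        ≤ ρ * (β * (2 * (K : ℝ) * η' k * ρ)) := by
      refine le_trans (abs_real_inner_le_norm _ _) ?_
      exact mul_le_mul (hgFgρ _) hgG (norm_nonneg _) hρ.le
    have hsqd : ‖wbar (k + 1) - wbar k‖ ^ 2 ≤ (η' k * ρ) ^ 2 := by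
      nlinarith [hnrm k, norm_nonneg (wbar (k + 1) - wbar k)]
    have hb1 : β * ‖wbar (k + 1) - wbar k‖ ^ 2 ≤ β * (η' k * ρ) ^ 2 :=
      mul_le_mul_of_nonneg_left hsqd hβ.le
    have hb2 : -(η' k * (ρ * (β * (2 * (K : ℝ) * η' k * ρ))))
        ≤ η' k * inner ℝ (gradient Fg (wbar k)) (g k - gradient Fg (wbar k)) := by
      have h5 := (abs_le.mp hCS).1
      nlinarith [(hη'pos k).le]
    rw [hinner, hip2] at hd1
    rw [hCsdef]
    nlinarith [hd1, hb1, hb2]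
  -- telescoping bound
  have htel : ∀ n : ℕ, ∑ k ∈ Finset.range n, η' k * ‖gradient Fg (wbar k)‖ ^ 2
      ≤ A + Cs * ∑ k ∈ Finset.range n, (η' k) ^ 2 := by
    intro n
    have h1 := my_telescope (fun k => Fg (wbar k))
      (fun k => η' k * ‖gradient Fg (wbar k)‖ ^ 2)
      (fun k => Cs * (η' k) ^ 2) hstep n
    have h2 : Fg (wbar 0) = Fg w₀ := by rw [hwbar0]
    have h3 : Fg wstar ≤ Fg (wbar n) := hstar _
    have h4 : ∑ k ∈ Finset.range n, Cs * (η' k) ^ 2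
        = Cs * ∑ k ∈ Finset.range n, (η' k) ^ 2 := by rw [Finset.mul_sum]
    rw [h4] at h1
    rw [hA']
    linarith
  -- summability facts
  set T := ∑' q, ηs q ^ 2 with hTdef
  have hT0 : 0 ≤ T := tsum_nonneg (fun q => sq_nonneg _)
  have hIccT : ∀ B, ∑ q ∈ Finset.Icc 1 B, ηs q ^ 2 ≤ T :=
    fun B => Summable.sum_le_tsum _ (fun q _ => sq_nonneg _) hsq
  have hblocks2 : ∀ B, ∑ k ∈ Finset.range (B * K), (η' k) ^ 2 ≤ (K : ℝ) * T := by
    intro B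
    have h1 := my_sum_div_blocks K hKpos (fun m => ηs (m + 1) ^ 2) B
    have h2 : ∑ k ∈ Finset.range (B * K), (η' k) ^ 2
        = (K : ℝ) * ∑ m ∈ Finset.range B, ηs (m + 1) ^ 2 := by
      rw [← h1]
    rw [h2, ← my_sum_Icc_one (fun q => ηs q ^ 2) B]
    exact mul_le_mul_of_nonneg_left (hIccT B) hKR.le
  -- shifted per-step bound
  have hstep2 : ∀ k : ℕ, η' k * ‖gradient Fg (wbar (k + 1))‖ ^ 2
      ≤ 2 * (η' k * ‖gradient Fg (wbar k)‖ ^ 2) + (2 * β * ρ ^ 2) * (η' k) ^ 2 := by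
    intro k
    have h1 : ‖gradient Fg (wbar (k + 1)) - gradient Fg (wbar k)‖ ≤ β * (η' k * ρ) := by
      refine le_trans (hsFg _ _) ?_
      exact mul_le_mul_of_nonneg_left (hnrm k) hβ.le
    have h2 : ‖gradient Fg (wbar (k + 1))‖ ≤ ‖gradient Fg (wbar k)‖ + β * (η' k * ρ) := by
      have h3 := norm_sub_norm_le (gradient Fg (wbar (k + 1))) (gradient Fg (wbar k))
      linarith
    have h3 : ‖gradient Fg (wbar (k + 1))‖ ^ 2
        ≤ 2 * ‖gradient Fg (wbar k)‖ ^ 2 + 2 * (β * (η' k * ρ)) ^ 2 := by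
      nlinarith [norm_nonneg (gradient Fg (wbar (k + 1))), norm_nonneg (gradient Fg (wbar k)),
        sq_nonneg (‖gradient Fg (wbar k)‖ - β * (η' k * ρ)),
        mul_nonneg (mul_nonneg hβ.le (hη'pos k).le) hρ.le]
    have h4 : η' k * (2 * (β * (η' k * ρ)) ^ 2) ≤ (2 * β * ρ ^ 2) * (η' k) ^ 2 := by
      have h5 := hη'β k
      have h6 : (0:ℝ) ≤ 2 * β * ρ ^ 2 * (η' k) ^ 2 := by positivity
      nlinarith [mul_le_mul_of_nonneg_left h5 h6]
    have h7 := mul_le_mul_of_nonneg_left h3 (hη'pos k).le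
    nlinarith [h7]
  -- numerator bound for part (2)
  have hnum2 : ∀ B, ∑ k ∈ Finset.Icc 1 (B * κ₁ * κ₂), ηs (qidx k) * ‖gradient Fg (wbar k)‖ ^ 2
      ≤ 2 * (A + Cs * ((K : ℝ) * T)) + (2 * β * ρ ^ 2) * ((K : ℝ) * T) := by
    intro B
    have hBK : B * κ₁ * κ₂ = B * K := by rw [hKdef, Nat.mul_assoc]
    rw [hBK, my_sum_Icc_one (fun k => ηs (qidx k) * ‖gradient Fg (wbar k)‖ ^ 2) (B * K)]
    have heq : ∀ m ∈ Finset.range (B * K),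
        ηs (qidx (m + 1)) * ‖gradient Fg (wbar (m + 1))‖ ^ 2
          = η' m * ‖gradient Fg (wbar (m + 1))‖ ^ 2 := fun m _ => by rw [hqsη m]
    rw [Finset.sum_congr rfl heq]
    have h1 : ∑ m ∈ Finset.range (B * K), η' m * ‖gradient Fg (wbar (m + 1))‖ ^ 2
        ≤ ∑ m ∈ Finset.range (B * K),
            (2 * (η' m * ‖gradient Fg (wbar m)‖ ^ 2) + (2 * β * ρ ^ 2) * (η' m) ^ 2) :=
      Finset.sum_le_sum (fun m _ => hstep2 m)
    rw [Finset.sum_add_distrib, ← Finset.mul_sum, ← Finset.mul_sum] at h1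
    have h2 := htel (B * K)
    have h3 := hblocks2 B
    have h4 : Cs * ∑ k ∈ Finset.range (B * K), (η' k) ^ 2 ≤ Cs * ((K : ℝ) * T) :=
      mul_le_mul_of_nonneg_left h3 hCs0
    have h5 : (2 * β * ρ ^ 2) * ∑ k ∈ Finset.range (B * K), (η' k) ^ 2
        ≤ (2 * β * ρ ^ 2) * ((K : ℝ) * T) :=
      mul_le_mul_of_nonneg_left h3 (by positivity)
    linarith
  -- denominator identity and divergence
  have hden2 : ∀ B, ∑ k ∈ Finset.Icc 1 (B * κ₁ * κ₂), ηs (qidx k)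
      = (K : ℝ) * ∑ q ∈ Finset.Icc 1 B, ηs q := by
    intro B
    have hBK : B * κ₁ * κ₂ = B * K := by rw [hKdef, Nat.mul_assoc]
    rw [hBK, my_sum_Icc_one (fun k => ηs (qidx k)) (B * K)]
    have heq : ∀ m ∈ Finset.range (B * K), ηs (qidx (m + 1)) = ηs (m / K + 1) :=
      fun m _ => by rw [hqs]
    rw [Finset.sum_congr rfl heq, my_sum_div_blocks K hKpos (fun m => ηs (m + 1)) B,
      my_sum_Icc_one ηs B]
  have hdentend : Tendsto (fun B => (K : ℝ) * ∑ q ∈ Finset.Icc 1 B, ηs q) atTop atTop :=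
    Tendsto.const_mul_atTop hKR hdiverge
  -- part (2)
  have part2 : Filter.Tendsto (fun B =>
      (∑ k ∈ Finset.Icc 1 (B * κ₁ * κ₂), ηs (qidx k) * ‖gradient Fg (wbar k)‖ ^ 2) /
        (∑ k ∈ Finset.Icc 1 (B * κ₁ * κ₂), ηs (qidx k)))
      Filter.atTop (nhds 0) := by
    refine my_quot_tendsto_zero (fun B => ?_) hnum2 ?_
    · exact Finset.sum_nonneg (fun k _ => mul_nonneg (hηpos _).le (sq_nonneg _))
    · simp only [hden2]
      exact hdentend
  -- part (1)
  obtain ⟨C, hC0, hC⟩ := my_Gnc_bound β δ Δ κ₁ κ₂ hκ₁ hκ₂ hβ hδpos hΔpos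
  have hGq : ∀ q, 0 ≤ Gnc β δ Δ κ₁ κ₂ (ηs q) ∧ Gnc β δ Δ κ₁ κ₂ (ηs q) ≤ C * ηs q ^ 2 :=
    fun q => hC (ηs q) (hηpos q) (hηβ q)
  have hKK : ((κ₁ : ℝ) * κ₂) = (K : ℝ) := by rw [hKdef]; push_cast; ring
  have hη2 : ∀ q, ηs q ^ 2 ≤ 1 / β ^ 2 := by
    intro q
    have h1 := hηβ q
    have h2 := hηpos q
    rw [le_div_iff₀ (by positivity)]
    nlinarith [mul_le_mul h1 h1 (by positivity : (0:ℝ) ≤ ηs q * β) (by norm_num : (0:ℝ) ≤ 1)]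
  have hs2 : ∀ B, ∑ q ∈ Finset.Icc 1 B, Gnc β δ Δ κ₁ κ₂ (ηs q) ≤ C * T := by
    intro B
    calc ∑ q ∈ Finset.Icc 1 B, Gnc β δ Δ κ₁ κ₂ (ηs q)
        ≤ ∑ q ∈ Finset.Icc 1 B, C * ηs q ^ 2 := Finset.sum_le_sum (fun q _ => (hGq q).2)
    _ = C * ∑ q ∈ Finset.Icc 1 B, ηs q ^ 2 := by rw [Finset.mul_sum]
    _ ≤ C * T := mul_le_mul_of_nonneg_left (hIccT B) hC0
  have hGsq : ∀ q, (Gnc β δ Δ κ₁ κ₂ (ηs q)) ^ 2 ≤ C ^ 2 / β ^ 2 * ηs q ^ 2 := by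
    intro q
    have h1 := (hGq q).1
    have h2 := (hGq q).2
    have h3 : (Gnc β δ Δ κ₁ κ₂ (ηs q)) ^ 2 ≤ C ^ 2 * ηs q ^ 2 * ηs q ^ 2 := by nlinarith
    have h4 : C ^ 2 * ηs q ^ 2 * (ηs q ^ 2) ≤ C ^ 2 * ηs q ^ 2 * (1 / β ^ 2) :=
      mul_le_mul_of_nonneg_left (hη2 q) (by positivity)
    have h5 : C ^ 2 * ηs q ^ 2 * (1 / β ^ 2) = C ^ 2 / β ^ 2 * ηs q ^ 2 := by ring
    linarith
  have hs3 : ∀ B, ∑ q ∈ Finset.Icc 1 B, (κ₁ : ℝ) * κ₂ * (Gnc β δ Δ κ₁ κ₂ (ηs q)) ^ 2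
      ≤ (K : ℝ) * (C ^ 2 / β ^ 2 * T) := by
    intro B
    have h1 : ∑ q ∈ Finset.Icc 1 B, (κ₁ : ℝ) * κ₂ * (Gnc β δ Δ κ₁ κ₂ (ηs q)) ^ 2
        ≤ ∑ q ∈ Finset.Icc 1 B, (K : ℝ) * (C ^ 2 / β ^ 2) * ηs q ^ 2 := by
      refine Finset.sum_le_sum (fun q _ => ?_)
      rw [hKK]
      have h2 := mul_le_mul_of_nonneg_left (hGsq q) hKR.le
      nlinarith [h2]
    have h3 : (K : ℝ) * (C ^ 2 / β ^ 2) * ∑ q ∈ Finset.Icc 1 B, ηs q ^ 2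
        ≤ (K : ℝ) * (C ^ 2 / β ^ 2) * T :=
      mul_le_mul_of_nonneg_left (hIccT B) (by positivity)
    have h4 : ∑ q ∈ Finset.Icc 1 B, (K : ℝ) * (C ^ 2 / β ^ 2) * ηs q ^ 2
        = (K : ℝ) * (C ^ 2 / β ^ 2) * ∑ q ∈ Finset.Icc 1 B, ηs q ^ 2 :=
      (Finset.mul_sum _ _ _).symm
    nlinarith [h1, h3, h4]
  have part1 : Filter.Tendsto (fun B =>
      (4 * A + 4 * ρ * (∑ q ∈ Finset.Icc 1 B, Gnc β δ Δ κ₁ κ₂ (ηs q))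
        + 2 * β ^ 2 * (∑ q ∈ Finset.Icc 1 B, (κ₁ : ℝ) * κ₂ * (Gnc β δ Δ κ₁ κ₂ (ηs q)) ^ 2))
        / ((κ₁ : ℝ) * κ₂ * ∑ q ∈ Finset.Icc 1 B, ηs q))
      Filter.atTop (nhds 0) := by
    refine my_quot_tendsto_zero
      (M := 4 * A + 4 * ρ * (C * T) + 2 * β ^ 2 * ((K : ℝ) * (C ^ 2 / β ^ 2 * T)))
      (fun B => ?_) (fun B => ?_) ?_
    · have h1 : 0 ≤ ∑ q ∈ Finset.Icc 1 B, Gnc β δ Δ κ₁ κ₂ (ηs q) :=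
        Finset.sum_nonneg (fun q _ => (hGq q).1)
      have h2 : 0 ≤ ∑ q ∈ Finset.Icc 1 B, (κ₁ : ℝ) * κ₂ * (Gnc β δ Δ κ₁ κ₂ (ηs q)) ^ 2 :=
        Finset.sum_nonneg (fun q _ => by positivity)
      nlinarith [hρ.le, sq_nonneg β]
    · have h1 := hs2 B
      have h2 := hs3 B
      nlinarith [hρ.le, sq_nonneg β]
    · simp only [hKK]
      exact hdentend
  exact ⟨part1, part2⟩
end
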